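/- arXiv:1104.4291 — 7 statements merged into one kernel-verified Lean document; each statement's English description precedes it below -/
import Mathlib

section
/- Let A be a commutative associative unital algebra over ℂ and D a derivation of A. Then the superalgebra J_{1/2}(A,D) = A ⊕ ηA with product a∘b = ab, a∘(ηb) = (1/2)η(ab), (ηa)∘(ηb) = aD(b) - D(a)b is a Lie antialgebra, i.e. it is supercommutative and satisfies axioms (LA0)–(LA3). -/
/-- The parity grading on `A × A`: `A × 0` is the even part, `0 × A` the odd part. -/
def evenodd (A : Type*) [AddCommGroup A] [Module ℂ A] (i : ZMod 2) :
    Submodule ℂ (A × A) :=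
  if i = 0 then (⊤ : Submodule ℂ A).prod ⊥ else (⊥ : Submodule ℂ A).prod ⊤

/-- The product of the half-unital Jordan superalgebra `J_{1/2}(A,D) = A ⊕ ηA`:
`a∘b = ab`, `a∘(ηb) = (1/2)η(ab)`, `(ηa)∘(ηb) = aD(b) - D(a)b`. -/
noncomputable def jmulHalf {A : Type*} [CommRing A] [Algebra ℂ A]
    (D : A →ₗ[ℂ] A) (u v : A × A) : A × A :=
  (u.1 * v.1 + (u.2 * D v.2 - D u.2 * v.2), (1/2 : ℂ) • (u.1 * v.2 + u.2 * v.1))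

/-!
On homogeneous elements the product is `a ∘ b = ab`, `a ∘ ηb = ½ η(ab)` and
`ηp ∘ ηq = W(p, q)`, where `W(p, q) = p D(q) - D(p) q` is the Wronskian of `D`.
Axiom (LA3) is then the identity `p W(q, r) + q W(r, p) + r W(p, q) = 0`, which holds for
any map `D`, and (LA2) reduces to `W(ap, q) + W(p, aq) = 2a W(p, q)`, the only place where
the Leibniz rule is used.
-/

section Wronskian

variable {A : Type*} [CommRing A]

def wronskian (D : A → A) (p q : A) : A := p * D q - D p * q

theorem wronskian_swap (D : A → A) (p q : A) : wronskian D q p = -wronskian D p q := by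
  simp only [wronskian]; ring

theorem wronskian_cyclic (D : A → A) (p q r : A) :
    p * wronskian D q r + q * wronskian D r p + r * wronskian D p q = 0 := by
  simp only [wronskian]; ring

theorem wronskian_mul_left_add_wronskian_mul_right {D : A → A}
    (hD : ∀ a b : A, D (a * b) = a * D b + D a * b) (a p q : A) :
    wronskian D (a * p) q + wronskian D p (a * q) = a * wronskian D p q + a * wronskian D p q := by
  simp only [wronskian, hD]; ring

variable {R : Type*} [CommSemiring R] [Algebra R A]

theorem wronskian_smul_left (D : A →ₗ[R] A) (c : R) (p q : A) :
    wronskian D (c • p) q = c • wronskian D p q := by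
  simp only [wronskian, map_smul, smul_mul_assoc, smul_sub]

theorem wronskian_smul_right (D : A →ₗ[R] A) (c : R) (p q : A) :
    wronskian D p (c • q) = c • wronskian D p q := by
  simp only [wronskian, map_smul, mul_smul_comm, smul_sub]

end Wronskian

theorem ZMod.eq_zero_or_eq_one (i : ZMod 2) : i = 0 ∨ i = 1 := by
  revert i; decide

section Grading

variable {A : Type*} [AddCommGroup A] [Module ℂ A]

theorem mk_mem_evenodd_zero {a b : A} : (a, b) ∈ evenodd A 0 ↔ b = 0 := by
  simp [evenodd, Submodule.mem_prod]

theorem mk_mem_evenodd_one {a b : A} : (a, b) ∈ evenodd A 1 ↔ a = 0 := by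
  simp [evenodd, Submodule.mem_prod]

end Grading

section JordanProduct

variable {A : Type*} [CommRing A] [Algebra ℂ A] (D : A →ₗ[ℂ] A)

@[simp]
theorem jmulHalf_even_even (a b : A) : jmulHalf D (a, 0) (b, 0) = (a * b, 0) := by
  simp [jmulHalf]

@[simp]
theorem jmulHalf_even_odd (a b : A) :
    jmulHalf D (a, 0) (0, b) = (0, (1/2 : ℂ) • (a * b)) := by
  simp [jmulHalf]

@[simp]
theorem jmulHalf_odd_even (a b : A) :
    jmulHalf D (0, a) (b, 0) = (0, (1/2 : ℂ) • (a * b)) := by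
  simp [jmulHalf]

@[simp]
theorem jmulHalf_odd_odd (a b : A) : jmulHalf D (0, a) (0, b) = (wronskian D a b, 0) := by
  simp [jmulHalf, wronskian]

end JordanProduct

section LieAntialgebra

variable {A : Type*} [CommRing A] [Algebra ℂ A] (D : A →ₗ[ℂ] A)

theorem jmulHalf_mem_evenodd_add {i j : ZMod 2} {u v : A × A} (hu : u ∈ evenodd A i)
    (hv : v ∈ evenodd A j) : jmulHalf D u v ∈ evenodd A (i + j) := by
  obtain ⟨a, b⟩ := u
  obtain ⟨c, d⟩ := v
  rcases ZMod.eq_zero_or_eq_one i with rfl | rfl <;>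
    rcases ZMod.eq_zero_or_eq_one j with rfl | rfl <;>
    simp only [mk_mem_evenodd_zero, mk_mem_evenodd_one] at hu hv <;> subst hu hv
  all_goals simp [mk_mem_evenodd_zero, mk_mem_evenodd_one, show (1 + 1 : ZMod 2) = 0 from rfl]

theorem jmulHalf_supercomm {i j : ZMod 2} {u v : A × A} (hu : u ∈ evenodd A i)
    (hv : v ∈ evenodd A j) : jmulHalf D u v = ((-1 : ℂ) ^ (i.val * j.val)) • jmulHalf D v u := by
  obtain ⟨a, b⟩ := u
  obtain ⟨c, d⟩ := v
  rcases ZMod.eq_zero_or_eq_one i with rfl | rfl <;>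
    rcases ZMod.eq_zero_or_eq_one j with rfl | rfl <;>
    simp only [mk_mem_evenodd_zero, mk_mem_evenodd_one] at hu hv <;> subst hu hv
  · simp [mul_comm]
  · simp [mul_comm]
  · simp [mul_comm]
  · simp [show ZMod.val (1 : ZMod 2) = 1 from rfl, wronskian_swap _ b d]

theorem jmulHalf_assoc_even {x₁ x₂ x₃ : A × A} (h₁ : x₁ ∈ evenodd A 0) (h₂ : x₂ ∈ evenodd A 0)
    (h₃ : x₃ ∈ evenodd A 0) :
    jmulHalf D x₁ (jmulHalf D x₂ x₃) = jmulHalf D (jmulHalf D x₁ x₂) x₃ := by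
  obtain ⟨a₁, _⟩ := x₁; obtain ⟨a₂, _⟩ := x₂; obtain ⟨a₃, _⟩ := x₃
  obtain rfl := mk_mem_evenodd_zero.1 h₁
  obtain rfl := mk_mem_evenodd_zero.1 h₂
  obtain rfl := mk_mem_evenodd_zero.1 h₃
  simp [mul_assoc]

theorem jmulHalf_even_even_odd {x₁ x₂ y : A × A} (h₁ : x₁ ∈ evenodd A 0) (h₂ : x₂ ∈ evenodd A 0)
    (hy : y ∈ evenodd A 1) :
    jmulHalf D x₁ (jmulHalf D x₂ y) = (1/2 : ℂ) • jmulHalf D (jmulHalf D x₁ x₂) y := by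
  obtain ⟨a₁, _⟩ := x₁; obtain ⟨a₂, _⟩ := x₂; obtain ⟨_, b⟩ := y
  obtain rfl := mk_mem_evenodd_zero.1 h₁
  obtain rfl := mk_mem_evenodd_zero.1 h₂
  obtain rfl := mk_mem_evenodd_one.1 hy
  simp [mul_assoc]

theorem jmulHalf_even_leibniz {x y₁ y₂ : A × A} (hD : ∀ a b : A, D (a * b) = a * D b + D a * b)
    (hx : x ∈ evenodd A 0) (h₁ : y₁ ∈ evenodd A 1) (h₂ : y₂ ∈ evenodd A 1) :
    jmulHalf D x (jmulHalf D y₁ y₂) =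
      jmulHalf D (jmulHalf D x y₁) y₂ + jmulHalf D y₁ (jmulHalf D x y₂) := by
  obtain ⟨a, _⟩ := x; obtain ⟨_, p⟩ := y₁; obtain ⟨_, q⟩ := y₂
  obtain rfl := mk_mem_evenodd_zero.1 hx
  obtain rfl := mk_mem_evenodd_one.1 h₁
  obtain rfl := mk_mem_evenodd_one.1 h₂
  simp only [jmulHalf_odd_odd, jmulHalf_even_even, jmulHalf_even_odd, wronskian_smul_left,
    wronskian_smul_right, Prod.mk_add_mk, ← smul_add,
    wronskian_mul_left_add_wronskian_mul_right hD, ← two_smul ℂ, smul_smul]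
  norm_num

theorem jmulHalf_odd_cyclic {y₁ y₂ y₃ : A × A} (h₁ : y₁ ∈ evenodd A 1) (h₂ : y₂ ∈ evenodd A 1)
    (h₃ : y₃ ∈ evenodd A 1) :
    jmulHalf D y₁ (jmulHalf D y₂ y₃) + jmulHalf D y₂ (jmulHalf D y₃ y₁)
      + jmulHalf D y₃ (jmulHalf D y₁ y₂) = 0 := by
  obtain ⟨_, p₁⟩ := y₁; obtain ⟨_, p₂⟩ := y₂; obtain ⟨_, p₃⟩ := y₃
  obtain rfl := mk_mem_evenodd_one.1 h₁
  obtain rfl := mk_mem_evenodd_one.1 h₂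
  obtain rfl := mk_mem_evenodd_one.1 h₃
  simp only [jmulHalf_odd_odd, jmulHalf_odd_even, Prod.mk_add_mk, add_zero, ← smul_add,
    wronskian_cyclic, smul_zero, Prod.mk_zero_zero]

end LieAntialgebra

/-- For a commutative associative unital ℂ-algebra `A` with derivation `D`,
`J_{1/2}(A,D)` is a Lie antialgebra: it is a supercommutative superalgebra (graded and
supercommutative) satisfying (LA0)-(LA3). -/
theorem stmt_2 (A : Type*) [CommRing A] [Algebra ℂ A]
    (D : A →ₗ[ℂ] A) (hD : ∀ a b : A, D (a * b) = a * D b + D a * b) :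
    (∀ (i j : ZMod 2) (u v : A × A), u ∈ evenodd A i → v ∈ evenodd A j →
        jmulHalf D u v ∈ evenodd A (i + j)) ∧
    (∀ (i j : ZMod 2) (u v : A × A), u ∈ evenodd A i → v ∈ evenodd A j →
        jmulHalf D u v = ((-1 : ℂ) ^ (i.val * j.val)) • jmulHalf D v u) ∧
    (∀ x1 x2 x3 : A × A, x1 ∈ evenodd A 0 → x2 ∈ evenodd A 0 → x3 ∈ evenodd A 0 →
        jmulHalf D x1 (jmulHalf D x2 x3) = jmulHalf D (jmulHalf D x1 x2) x3) ∧
    (∀ x1 x2 y : A × A, x1 ∈ evenodd A 0 → x2 ∈ evenodd A 0 → y ∈ evenodd A 1 →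
        jmulHalf D x1 (jmulHalf D x2 y) = (1/2 : ℂ) • jmulHalf D (jmulHalf D x1 x2) y) ∧
    (∀ x y1 y2 : A × A, x ∈ evenodd A 0 → y1 ∈ evenodd A 1 → y2 ∈ evenodd A 1 →
        jmulHalf D x (jmulHalf D y1 y2) =
          jmulHalf D (jmulHalf D x y1) y2 + jmulHalf D y1 (jmulHalf D x y2)) ∧
    (∀ y1 y2 y3 : A × A, y1 ∈ evenodd A 1 → y2 ∈ evenodd A 1 → y3 ∈ evenodd A 1 →
        jmulHalf D y1 (jmulHalf D y2 y3) + jmulHalf D y2 (jmulHalf D y3 y1)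
          + jmulHalf D y3 (jmulHalf D y1 y2) = 0) :=
  ⟨fun _ _ _ _ => jmulHalf_mem_evenodd_add D,
    fun _ _ _ _ => jmulHalf_supercomm D,
    fun _ _ _ => jmulHalf_assoc_even D,
    fun _ _ _ => jmulHalf_even_even_odd D,
    fun _ _ _ => jmulHalf_even_leibniz D hD,
    fun _ _ _ => jmulHalf_odd_cyclic D⟩
end

section
/- Let θ ∈ ℂ*, p ∈ ℤ*, A = ℂ[x, y, y^{-1}]/(x² - θy^{2p} - 1), and D = x∂_y + pθy^{2p-1}∂_x. Then A has no nonzero proper D-invariant ideal; equivalently, the only ideals I of A with D(I) ⊆ I are 0 and A. -/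
/-- `ℂ[x, y, y⁻¹]`: polynomials in `x` over Laurent polynomials in `y`. -/
abbrev Rng : Type := Polynomial (LaurentPolynomial ℂ)

/-- The ideal generated by `x² - θy^{2p} - 1`. -/
noncomputable def relIdeal (θ : ℂ) (p : ℤ) : Ideal Rng :=
  Ideal.span {Polynomial.X ^ 2
    - Polynomial.C (LaurentPolynomial.C θ * LaurentPolynomial.T (2 * p)) - 1}

/-- `A = ℂ[x, y, y⁻¹]/(x² - θy^{2p} - 1)`. -/
abbrev Aqt (θ : ℂ) (p : ℤ) : Type := Rng ⧸ relIdeal θ p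

/-!
Write `y`, `x` for the images of `y`, `x` in `A`, and let `J ⊆ ℂ[y]` be the ideal of polynomials
`f` with `f(y) ∈ I`. Since `A` is free over `ℂ[y^{±1}]` with basis `1, x` and `θy^{2p} + 1` has a
simple root, the norm of a nonzero element of `I` is nonzero, so `J ≠ 0` when `I ≠ 0`.
Choose `b` so that `c := y^b x²` and `e := y^b D(x)` are polynomials in `y`. Applying `D` to
`x f(y)` and to `D(f(y)) = f'(y) x` shows that a generator `g` of `J` divides `c g'` and
`c g'' + e g'`. At a nonzero root `λ` of `g` of multiplicity `m`, the first relation forces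
`c(λ) = 0`, and then the two relations give `m c'(λ) = c'(λ) - e(λ) = c'(λ) / 2`, which is
impossible as `c'(λ) = 2 e(λ) ≠ 0`. Hence `g` is a monomial, `g(y)` is a unit and `I = A`.
-/

open Polynomial
open LaurentPolynomial (T)

namespace Polynomial

variable {K : Type*} [Field K]

theorem eq_C_leadingCoeff_mul_X_pow_of_forall_isRoot_eq_zero [IsAlgClosed K] {g : K[X]}
    (h : ∀ a, g.IsRoot a → a = 0) : g = C g.leadingCoeff * X ^ g.natDegree := by
  have hroots : g.roots = Multiset.replicate g.natDegree 0 := by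
    rw [← IsAlgClosed.card_roots_eq_natDegree, Multiset.eq_replicate_card]
    exact fun a ha => h a (mem_roots'.1 ha).2
  conv_lhs => rw [← C_leadingCoeff_mul_prod_multiset_X_sub_C (p := g)
    IsAlgClosed.card_roots_eq_natDegree, hroots]
  simp

theorem exists_ne_zero_isRoot_C_mul_X_pow_add_X_pow [IsAlgClosed K] {u : K} (hu : u ≠ 0)
    {m n : ℕ} (hmn : m ≠ n) : ∃ a ≠ 0, (C u * X ^ m + X ^ n).IsRoot a := by
  by_contra! h
  have hmono := eq_C_leadingCoeff_mul_X_pow_of_forall_isRoot_eq_zero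
    (fun a ha => by_contra fun ha0 => h a ha0 ha)
  have hm := congrArg (coeff · m) hmono
  have hn := congrArg (coeff · n) hmono
  generalize (C u * X ^ m + X ^ n).leadingCoeff = l at hm hn
  generalize (C u * X ^ m + X ^ n).natDegree = d at hm hn
  simp only [coeff_add, coeff_C_mul_X_pow, coeff_X_pow, if_neg hmn, if_neg hmn.symm] at hm hn
  clear h hmono
  split_ifs at hm hn <;> simp_all

theorem eval_derivative_C_mul_X_pow_add_X_pow_mul_of_isRoot [CharZero K] {u a : K} {m n : ℕ}
    (h : (C u * X ^ m + X ^ n).IsRoot a) :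
    (derivative (C u * X ^ m + X ^ n)).eval a * a = ((m : K) - n) * u * a ^ m := by
  have hn : a ^ n = -(u * a ^ m) := by
    simp only [IsRoot, eval_add, eval_mul, eval_C, eval_pow, eval_X] at h
    linear_combination h
  have key : ∀ k : ℕ, (k : K) * a ^ (k - 1) * a = k * a ^ k := by
    rintro (_ | k) <;> simp [pow_succ, mul_assoc]
  simp only [derivative_add, derivative_C_mul_X_pow, derivative_X_pow, eval_add, eval_mul,
    eval_C, eval_pow, eval_X]
  linear_combination u * key m + key n + (n : K) * hn

theorem eval_eq_rootMultiplicity_mul_eval_derivative [CharZero K] {g c q : K[X]} {a : K}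
    (hg : g ≠ 0) (hc : c.IsRoot a) (h : c * derivative g = g * q) :
    q.eval a = g.rootMultiplicity a * (derivative c).eval a := by
  obtain ⟨u, hgu, hu⟩ := exists_eq_pow_rootMultiplicity_mul_and_not_dvd g hg a
  obtain ⟨v, hcv⟩ := dvd_iff_isRoot.2 hc
  set m := g.rootMultiplicity a
  have hua : u.eval a ≠ 0 := fun h0 => hu (dvd_iff_isRoot.2 h0)
  have hderiv : (X - C a) * derivative g =
      (X - C a) ^ m * (C (m : K) * u + (X - C a) * derivative u) := by
    rw [hgu, derivative_mul, derivative_X_sub_C_pow]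
    rcases m with _ | k
    · simp
    · simp only [Nat.add_sub_cancel, pow_succ]; ring
  have hcancel : v * (C (m : K) * u + (X - C a) * derivative u) = u * q := by
    apply mul_left_cancel₀ (pow_ne_zero (m + 1) (X_sub_C_ne_zero a))
    calc (X - C a) ^ (m + 1) * (v * (C (m : K) * u + (X - C a) * derivative u))
        = (X - C a) * v * ((X - C a) * derivative g) := by rw [hderiv]; ring
      _ = (X - C a) * (g * q) := by rw [← hcv, ← h]; ring
      _ = _ := by rw [hgu]; ring
  have hv : (derivative c).eval a = v.eval a := by simp [hcv, derivative_mul]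
  have := congrArg (eval a) hcancel
  simp only [eval_mul, eval_add, eval_C, eval_sub, eval_X, sub_self, zero_mul, add_zero] at this
  rw [hv]
  exact mul_left_cancel₀ hua (by linear_combination -this)

theorem not_isRoot_of_dvd_mul_derivative [CharZero K] {g c e : K[X]} {a : K} (hg : g ≠ 0)
    (h₁ : g ∣ c * derivative g) (h₂ : g ∣ c * derivative (derivative g) + e * derivative g)
    (hc : c.IsRoot a → (derivative c).eval a ≠ 0 ∧ 2 * e.eval a = (derivative c).eval a) :
    ¬ g.IsRoot a := by
  intro hga
  obtain ⟨q, hq⟩ := h₁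
  have hca : c.IsRoot a :=
    isRoot_of_isRoot_of_dvd_derivative_mul hg ⟨q, by rw [mul_comm, hq]⟩ hga
  obtain ⟨hc', hce⟩ := hc hca
  have hq₁ := eval_eq_rootMultiplicity_mul_eval_derivative hg hca hq
  -- differentiating `c g' = g q` turns the second divisibility into `g ∣ g' (q - c' + e)`
  have hq₂ : (q - derivative c + e).IsRoot a := by
    refine isRoot_of_isRoot_of_dvd_derivative_mul hg ?_ hga
    have hd := congrArg derivative hq
    rw [derivative_mul, derivative_mul] at hd
    refine (dvd_add_right (dvd_mul_right g (derivative q))).1 ?_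
    convert h₂ using 1
    linear_combination -hd
  have hm : (2 * g.rootMultiplicity a : K) ≠ 1 := by
    exact_mod_cast (by omega : 2 * g.rootMultiplicity a ≠ 1)
  apply hm
  simp only [IsRoot, eval_add, eval_sub, hq₁] at hq₂
  apply mul_right_cancel₀ hc'
  linear_combination 2 * hq₂ - hce

theorem eq_zero_of_mul_sq_eq_sq_mul [CharZero K] {u c f g : K[X]} {a : K} (hu : ¬ u.IsRoot a)
    (hc : c.IsRoot a) (hc' : (derivative c).eval a ≠ 0) (h : u * f ^ 2 = g ^ 2 * c) : g = 0 := by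
  have hc0 : c ≠ 0 := by rintro rfl; simp at hc'
  have hu0 : u ≠ 0 := by rintro rfl; simp at hu
  have hmult : c.rootMultiplicity a = 1 := by
    have := derivative_rootMultiplicity_of_root hc
    rw [rootMultiplicity_eq_zero hc'] at this
    have := (rootMultiplicity_pos hc0).2 hc
    omega
  by_contra hg
  have hf : f ≠ 0 := by
    rintro rfl
    simp [hg, hc0] at h
  -- the multiplicity at `a` is even on the left and odd on the right
  have hmul := congrArg (rootMultiplicity a) h
  rw [rootMultiplicity_mul (by positivity), rootMultiplicity_mul (by positivity), sq, sq,
    rootMultiplicity_mul (by positivity), rootMultiplicity_mul (by positivity),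
    rootMultiplicity_eq_zero hu, hmult] at hmul
  omega

end Polynomial

namespace Derivation

variable {K A : Type*} [Field K] [CommRing A] [Algebra K A] (D : Derivation K A A)
  {x y : A} {k : ℕ} {c e : K[X]}

theorem pow_mul_apply_mul_aeval (hDy : D y = x) (hc : y ^ k * x ^ 2 = aeval y c)
    (he : y ^ k * D x = aeval y e) (f : K[X]) :
    y ^ k * D (x * aeval y f) = aeval y (c * derivative f + e * f) := by
  rw [D.leibniz, D.map_aeval, hDy, smul_eq_mul, smul_eq_mul, map_add, map_mul, map_mul, ← hc,
    ← he]
  ring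

theorem aeval_mem_of_mul_aeval_mem (hDy : D y = x) (hc : y ^ k * x ^ 2 = aeval y c)
    (he : y ^ k * D x = aeval y e) {I : Ideal A} (hI : ∀ a ∈ I, D a ∈ I) {f : K[X]}
    (hf : x * aeval y f ∈ I) : aeval y (c * derivative f + e * f) ∈ I := by
  rw [← D.pow_mul_apply_mul_aeval hDy hc he]
  exact I.mul_mem_left _ (hI _ hf)

theorem eq_top_of_comap_aeval_ne_bot [IsAlgClosed K] [CharZero K] (hy : IsUnit y)
    (hDy : D y = x) (hc : y ^ k * x ^ 2 = aeval y c) (he : y ^ k * D x = aeval y e)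
    (hce : ∀ a ≠ 0, c.IsRoot a →
      (derivative c).eval a ≠ 0 ∧ 2 * e.eval a = (derivative c).eval a)
    {I : Ideal A} (hI : ∀ a ∈ I, D a ∈ I) (hJ : I.comap (aeval y : K[X] →ₐ[K] A) ≠ ⊥) :
    I = ⊤ := by
  set J := I.comap (aeval y : K[X] →ₐ[K] A)
  set g := Submodule.IsPrincipal.generator J
  have hgJ : g ∈ J := Submodule.IsPrincipal.generator_mem J
  have hdvd : ∀ f ∈ J, g ∣ f := fun f hf => (Submodule.IsPrincipal.mem_iff_generator_dvd J).1 hf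
  have hg : g ≠ 0 := by
    rwa [Ne, ← Submodule.IsPrincipal.eq_bot_iff_generator_eq_zero]
  have h₁ : g ∣ c * derivative g :=
    (dvd_add_left (dvd_mul_left g e)).1
      (hdvd _ (D.aeval_mem_of_mul_aeval_mem hDy hc he hI (I.mul_mem_left x hgJ)))
  have h₂ : g ∣ c * derivative (derivative g) + e * derivative g := by
    refine hdvd _ (D.aeval_mem_of_mul_aeval_mem hDy hc he hI ?_)
    rw [mul_comm, ← hDy, ← smul_eq_mul, ← D.map_aeval]
    exact hI _ hgJ
  have hroots : ∀ a, g.IsRoot a → a = 0 := fun a ha =>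
    by_contra fun ha0 => not_isRoot_of_dvd_mul_derivative hg h₁ h₂ (hce a ha0) ha
  have hunit : IsUnit (aeval y g) := by
    rw [eq_C_leadingCoeff_mul_X_pow_of_forall_isRoot_eq_zero hroots, map_mul, map_pow, aeval_C,
      aeval_X]
    exact ((leadingCoeff_ne_zero.2 hg).isUnit.map _).mul (hy.pow _)
  exact I.eq_top_of_isUnit_mem hgJ hunit

end Derivation

namespace Ideal

variable {K A : Type*} [Field K] [CharZero K] [CommRing A] [Algebra K A] {x y : A} {k : ℕ}
  {c : K[X]}

theorem comap_aeval_ne_bot (hy : IsUnit y) (hc : y ^ k * x ^ 2 = aeval y c)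
    (hsplit : ∀ z : A, ∃ (N : ℕ) (F G : K[X]), z * y ^ N = aeval y F + aeval y G * x)
    {a : K} (ha : a ≠ 0) (hca : c.IsRoot a) (hca' : (derivative c).eval a ≠ 0)
    {I : Ideal A} (hI : I ≠ ⊥) : I.comap (aeval y : K[X] →ₐ[K] A) ≠ ⊥ := by
  obtain ⟨z, hzI, hz⟩ := Submodule.exists_mem_ne_zero_of_ne_bot hI
  obtain ⟨N, F, G, hFG⟩ := hsplit z
  -- the norm of `F(y) + G(y) x`, cleared of denominators
  set W : K[X] := X ^ k * F ^ 2 - G ^ 2 * c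
  have hW : aeval y W = y ^ k * (aeval y F - aeval y G * x) * y ^ N * z := by
    simp only [W, map_sub, map_mul, map_pow, aeval_X, ← hc]
    linear_combination (y ^ k * (aeval y F - aeval y G * x)) * hFG.symm
  refine (Submodule.ne_bot_iff _).2
    ⟨W, by rw [Ideal.mem_comap, hW]; exact I.mul_mem_left _ hzI, fun hW0 => hz ?_⟩
  have hG : G = 0 := eq_zero_of_mul_sq_eq_sq_mul (by simp [ha]) hca hca' (sub_eq_zero.1 hW0)
  have hF : F = 0 := by simpa [W, hG] using hW0
  simpa [hG, hF, (hy.pow N).mul_left_eq_zero] using hFG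

end Ideal

namespace Aqt

variable (θ : ℂ) (p : ℤ)

noncomputable def ofLaurent : LaurentPolynomial ℂ →+* Aqt θ p :=
  (Ideal.Quotient.mk (relIdeal θ p)).comp Polynomial.C

local notation "𝔶" => Ideal.Quotient.mk (relIdeal θ p) (Polynomial.C (T 1))
local notation "𝔵" => Ideal.Quotient.mk (relIdeal θ p) (X : Rng)

theorem isUnit_mk_C_T_one : IsUnit 𝔶 := (LaurentPolynomial.isUnit_T 1).map (ofLaurent θ p)

theorem ofLaurent_T_natCast (n : ℕ) : ofLaurent θ p (T n) = 𝔶 ^ n := by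
  change _ = ofLaurent θ p (T 1) ^ n
  rw [← map_pow, LaurentPolynomial.T_pow, mul_one]

theorem ofLaurent_toLaurent (f : ℂ[X]) : ofLaurent θ p (toLaurent f) = aeval 𝔶 f := by
  induction f using Polynomial.induction_on' with
  | add f g hf hg => simp only [map_add, hf, hg]
  | monomial n a =>
    rw [← C_mul_X_pow_eq_monomial, toLaurent_C_mul_X_pow, map_mul, ofLaurent_T_natCast,
      map_mul, map_pow, aeval_C, aeval_X]
    rfl

theorem X_sq_sub_mem_relIdeal :
    X ^ 2 - Polynomial.C (LaurentPolynomial.C θ * T (2 * p) + 1) ∈ relIdeal θ p := by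
  rw [map_add, map_one, ← sub_sub]
  exact Ideal.subset_span rfl

theorem mk_X_sq : 𝔵 ^ 2 = ofLaurent θ p (LaurentPolynomial.C θ * T (2 * p) + 1) := by
  rw [← map_pow]
  exact Ideal.Quotient.eq.2 (X_sq_sub_mem_relIdeal θ p)

variable {p}

theorem pow_mul_mk_X_sq {a b : ℕ} (hab : (b : ℤ) + 2 * p = a + 1) :
    𝔶 ^ b * 𝔵 ^ 2 = aeval 𝔶 (Polynomial.C θ * X ^ (a + 1) + X ^ b) := by
  rw [mk_X_sq, ← ofLaurent_T_natCast, ← map_mul, ← ofLaurent_toLaurent, map_add,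
    toLaurent_C_mul_X_pow, toLaurent_X_pow, mul_add, mul_one, mul_left_comm,
    ← LaurentPolynomial.T_add, hab]
  push_cast
  rfl

theorem pow_mul_ofLaurent_eq_aeval {a b : ℕ} (hab : (b : ℤ) + 2 * p = a + 1) :
    𝔶 ^ b * Ideal.Quotient.mk (relIdeal θ p)
        (Polynomial.C (LaurentPolynomial.C ((p : ℂ) * θ) * T (2 * p - 1))) =
      aeval 𝔶 (Polynomial.C ((p : ℂ) * θ) * X ^ a) := by
  rw [← ofLaurent_T_natCast]
  change ofLaurent θ p _ * ofLaurent θ p _ = _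
  rw [← map_mul, ← ofLaurent_toLaurent, toLaurent_C_mul_X_pow,
    mul_left_comm, ← LaurentPolynomial.T_add]
  congr 3
  omega

theorem exists_mul_pow_eq_aeval_add_aeval_mul (z : Aqt θ p) :
    ∃ (N : ℕ) (F G : ℂ[X]), z * 𝔶 ^ N = aeval 𝔶 F + aeval 𝔶 G * 𝔵 := by
  set P : Rng := X ^ 2 - Polynomial.C (LaurentPolynomial.C θ * T (2 * p) + 1)
  have hP : P.Monic := monic_X_pow_sub_C _ two_ne_zero
  have hmod (r : Rng) : Ideal.Quotient.mk (relIdeal θ p) r = Ideal.Quotient.mk _ (r %ₘ P) := by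
    refine Ideal.Quotient.eq.2 ?_
    rw [sub_eq_of_eq_add' (modByMonic_add_div r P).symm]
    exact Ideal.mul_mem_right _ _ (X_sq_sub_mem_relIdeal θ p)
  obtain ⟨r, rfl⟩ := Ideal.Quotient.mk_surjective z
  have hdeg : (r %ₘ P).degree ≤ 1 := by
    have := degree_modByMonic_lt r hP
    rw [degree_X_pow_sub_C two_pos] at this
    exact Order.le_of_lt_succ this
  obtain ⟨n₀, F₀, hF₀⟩ := LaurentPolynomial.exists_T_pow ((r %ₘ P).coeff 0)
  obtain ⟨n₁, G₁, hG₁⟩ := LaurentPolynomial.exists_T_pow ((r %ₘ P).coeff 1)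
  refine ⟨n₀ + n₁, F₀ * X ^ n₁, G₁ * X ^ n₀, ?_⟩
  have hcoeff {c : LaurentPolynomial ℂ} {n : ℕ} {F : ℂ[X]} (h : toLaurent F = c * T n) :
      aeval 𝔶 F = ofLaurent θ p c * 𝔶 ^ n := by
    rw [← ofLaurent_toLaurent, h, map_mul, ofLaurent_T_natCast]
  simp only [map_mul, map_pow, aeval_X]
  rw [hmod, eq_X_add_C_of_degree_le_one hdeg, hcoeff hF₀, hcoeff hG₁]
  change (ofLaurent θ p _ * 𝔵 + ofLaurent θ p _) * _ = _
  ring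

theorem eval_derivative_eq_two_mul_eval {a b : ℕ} (hab : (b : ℤ) + 2 * p = a + 1) {l : ℂ}
    (hl : l ≠ 0) (h : (Polynomial.C θ * X ^ (a + 1) + X ^ b).IsRoot l) :
    (derivative (Polynomial.C θ * X ^ (a + 1) + X ^ b)).eval l =
      2 * (Polynomial.C ((p : ℂ) * θ) * X ^ a).eval l := by
  have hcast : ((a + 1 : ℕ) : ℂ) - b = 2 * p := by
    exact_mod_cast (by omega : ((a + 1 : ℕ) : ℤ) - b = 2 * p)
  refine mul_right_cancel₀ hl ?_
  rw [eval_derivative_C_mul_X_pow_add_X_pow_mul_of_isRoot h, hcast]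
  simp only [eval_mul, eval_C, eval_pow, eval_X]
  ring

end Aqt

/-- For `θ ∈ ℂ*`, `p ∈ ℤ*`, the algebra
`A = ℂ[x, y, y⁻¹]/(x² - θy^{2p} - 1)` with the derivation `D` determined by
`D(y) = x`, `D(x) = pθy^{2p-1}` has no nonzero proper `D`-invariant ideal. -/
theorem stmt_6 (θ : ℂ) (hθ : θ ≠ 0) (p : ℤ) (hp : p ≠ 0)
    (D : Derivation ℂ (Aqt θ p) (Aqt θ p))
    (hDy : D (Ideal.Quotient.mk (relIdeal θ p) (Polynomial.C (LaurentPolynomial.T 1))) =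
      Ideal.Quotient.mk (relIdeal θ p) Polynomial.X)
    (hDx : D (Ideal.Quotient.mk (relIdeal θ p) Polynomial.X) =
      Ideal.Quotient.mk (relIdeal θ p)
        (Polynomial.C (LaurentPolynomial.C ((p : ℂ) * θ) * LaurentPolynomial.T (2 * p - 1))))
    (I : Ideal (Aqt θ p)) (hI : ∀ a ∈ I, D a ∈ I) :
    I = ⊥ ∨ I = ⊤ := by
  obtain ⟨a, b, hab⟩ : ∃ a b : ℕ, (b : ℤ) + 2 * p = a + 1 :=
    ⟨(2 * p - 1).toNat, (1 - 2 * p).toNat, by omega⟩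
  have hy := Aqt.isUnit_mk_C_T_one θ p
  have hc := Aqt.pow_mul_mk_X_sq θ hab
  have he := Aqt.pow_mul_ofLaurent_eq_aeval θ hab
  rw [← hDx] at he
  have hce : ∀ l ≠ 0, (C θ * X ^ (a + 1) + X ^ b).IsRoot l →
      (derivative (C θ * X ^ (a + 1) + X ^ b)).eval l ≠ 0 ∧
        2 * (C ((p : ℂ) * θ) * X ^ a).eval l = (derivative (C θ * X ^ (a + 1) + X ^ b)).eval l :=
    fun l hl hroot => have h := Aqt.eval_derivative_eq_two_mul_eval θ hab hl hroot
    ⟨by rw [h]; simp [hθ, hp, hl], h.symm⟩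
  rcases eq_or_ne I ⊥ with hI0 | hI0
  · exact Or.inl hI0
  obtain ⟨l, hl, hroot⟩ := exists_ne_zero_isRoot_C_mul_X_pow_add_X_pow hθ (by omega : a + 1 ≠ b)
  have hJ := Ideal.comap_aeval_ne_bot (A := Aqt θ p) hy hc
    (Aqt.exists_mul_pow_eq_aeval_add_aeval_mul θ) hl hroot (hce l hl hroot).1 hI0
  exact Or.inr <| D.eq_top_of_comap_aeval_ne_bot (A := Aqt θ p) hy hDy hc he hce hI hJ
end

section
/- Let A be a commutative associative unital algebra over a field of characteristic 0 with a derivation D such that A has no nonzero proper D-invariant ideals and D ≠ 0. Then the Jordan superalgebra J_1(A,D) = A ⊕ ηA with product a∘b = ab, a∘(ηb) = η(ab), (ηa)∘(ηb) = aD(b) - D(a)b is simple (has no nonzero proper graded two-sided ideals). -/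
/-!
The even and odd components `I₀ = {a | a ∈ I}` and `I₁ = {b | ηb ∈ I}` of a graded ideal `I`
are ideals of `A`, and multiplication by `η1` gives `I₀ ⊆ I₁` and `D(I₁) ⊆ I₀`, because
`(η1)∘a = ηa` and `(η1)∘(ηb) = D b` (using `D 1 = 0`). So both components are `D`-invariant,
hence each is `0` or `A`. If `I₁ = 0` then `I₀ = 0` and `I = 0`. If `I₁ = A` then `η1 ∈ I`, and
`(ηc)∘(η1) = -D c` puts the image of `D ≠ 0` inside `I₀`; so `I₀ = A` too and `I = J`.
-/

/-- The product of the Jordan superalgebra `J_1(A,D) = A ⊕ ηA`: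
`a∘b = ab`, `a∘(ηb) = η(ab)`, `(ηa)∘(ηb) = aD(b) - D(a)b`. -/
def jmulOne {F A : Type*} [Field F] [CommRing A] [Algebra F A]
    (D : A →ₗ[F] A) (u v : A × A) : A × A :=
  (u.1 * v.1 + (u.2 * D v.2 - D u.2 * v.2), u.1 * v.2 + u.2 * v.1)

namespace JordanSuperalgebraJ1

variable {F A : Type*} [Field F] [CommRing A] [Algebra F A] {D : A →ₗ[F] A}

theorem map_one_eq_zero_of_leibniz (hD : ∀ a b : A, D (a * b) = a * D b + D a * b) :
    D 1 = 0 := by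
  simpa using hD 1 1

@[simp]
theorem jmulOne_even_even (c a : A) : jmulOne D (c, 0) (a, 0) = (c * a, 0) := by
  simp [jmulOne]

@[simp]
theorem jmulOne_even_odd (c b : A) : jmulOne D (c, 0) (0, b) = (0, c * b) := by
  simp [jmulOne]

@[simp]
theorem jmulOne_odd_even (c a : A) : jmulOne D (0, c) (a, 0) = (0, c * a) := by
  simp [jmulOne]

@[simp]
theorem jmulOne_odd_odd (c b : A) : jmulOne D (0, c) (0, b) = (c * D b - D c * b, 0) := by
  simp [jmulOne]

section Components

variable (I : Submodule F (A × A)) (hI : ∀ v : A × A, ∀ u ∈ I, jmulOne D v u ∈ I)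

def evenIdeal : Ideal A where
  carrier := {a | (a, 0) ∈ I}
  add_mem' ha hb := by simpa using I.add_mem ha hb
  zero_mem' := I.zero_mem
  smul_mem' c a ha := by simpa using hI (c, 0) _ ha

def oddIdeal : Ideal A where
  carrier := {b | (0, b) ∈ I}
  add_mem' ha hb := by simpa using I.add_mem ha hb
  zero_mem' := I.zero_mem
  smul_mem' c b hb := by simpa using hI (c, 0) _ hb

variable {I}

theorem mem_evenIdeal {a : A} : a ∈ evenIdeal I hI ↔ (a, 0) ∈ I := Iff.rfl

theorem mem_oddIdeal {b : A} : b ∈ oddIdeal I hI ↔ (0, b) ∈ I := Iff.rfl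

theorem evenIdeal_le_oddIdeal : evenIdeal I hI ≤ oddIdeal I hI := fun a ha => by
  simpa [mem_oddIdeal] using hI (0, 1) _ ha

theorem map_mem_evenIdeal_of_mem_oddIdeal (hD1 : D 1 = 0) {b : A} (hb : b ∈ oddIdeal I hI) :
    D b ∈ evenIdeal I hI := by
  simpa [mem_evenIdeal, hD1] using hI (0, 1) _ hb

theorem map_mem_oddIdeal_of_mem_oddIdeal (hD1 : D 1 = 0) {b : A} (hb : b ∈ oddIdeal I hI) :
    D b ∈ oddIdeal I hI :=
  evenIdeal_le_oddIdeal hI (map_mem_evenIdeal_of_mem_oddIdeal hI hD1 hb)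

theorem map_mem_evenIdeal_of_mem_evenIdeal (hD1 : D 1 = 0) {a : A} (ha : a ∈ evenIdeal I hI) :
    D a ∈ evenIdeal I hI :=
  map_mem_evenIdeal_of_mem_oddIdeal hI hD1 (evenIdeal_le_oddIdeal hI ha)

theorem map_mem_evenIdeal_of_one_mem_oddIdeal (hD1 : D 1 = 0) (h : 1 ∈ oddIdeal I hI) (c : A) :
    D c ∈ evenIdeal I hI := by
  rw [mem_evenIdeal]
  simpa [hD1] using I.neg_mem (hI (0, c) _ h)

theorem eq_bot_of_oddIdeal_eq_bot (hgraded : ∀ u ∈ I, (u.1, (0 : A)) ∈ I ∧ ((0 : A), u.2) ∈ I)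
    (h : oddIdeal I hI = ⊥) : I = ⊥ := by
  refine (Submodule.eq_bot_iff I).2 fun u hu => ?_
  have h1 : u.1 ∈ oddIdeal I hI := evenIdeal_le_oddIdeal hI (hgraded u hu).1
  have h2 : u.2 ∈ oddIdeal I hI := (hgraded u hu).2
  rw [h, Ideal.mem_bot] at h1 h2
  exact Prod.ext h1 h2

theorem eq_top_of_evenIdeal_eq_top_of_oddIdeal_eq_top (h0 : evenIdeal I hI = ⊤)
    (h1 : oddIdeal I hI = ⊤) : I = ⊤ := by
  refine eq_top_iff.2 fun u _ => ?_
  have ha : u.1 ∈ evenIdeal I hI := h0 ▸ Submodule.mem_top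
  have hb : u.2 ∈ oddIdeal I hI := h1 ▸ Submodule.mem_top
  simpa using I.add_mem ha hb

end Components

end JordanSuperalgebraJ1

open JordanSuperalgebraJ1

theorem stmt_7_general (F : Type*) [Field F]
    (A : Type*) [CommRing A] [Algebra F A]
    (D : A →ₗ[F] A) (hD : ∀ a b : A, D (a * b) = a * D b + D a * b)
    (hDne : D ≠ 0)
    (hsimple : ∀ I : Ideal A, (∀ a ∈ I, D a ∈ I) → I = ⊥ ∨ I = ⊤)
    (I : Submodule F (A × A))
    (hgraded : ∀ u ∈ I, (u.1, (0 : A)) ∈ I ∧ ((0 : A), u.2) ∈ I)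
    (hideal : ∀ v : A × A, ∀ u ∈ I, jmulOne D v u ∈ I ∧ jmulOne D u v ∈ I) :
    I = ⊥ ∨ I = ⊤ := by
  have hD1 := map_one_eq_zero_of_leibniz hD
  have hI : ∀ v : A × A, ∀ u ∈ I, jmulOne D v u ∈ I := fun v u hu => (hideal v u hu).1
  rcases hsimple _ fun _ => map_mem_oddIdeal_of_mem_oddIdeal hI hD1 with h1 | h1
  · exact .inl (eq_bot_of_oddIdeal_eq_bot hI hgraded h1)
  have hDeven := map_mem_evenIdeal_of_one_mem_oddIdeal hI hD1 (h1 ▸ Submodule.mem_top)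
  have heven_ne_bot : evenIdeal I hI ≠ ⊥ := fun h =>
    hDne (LinearMap.ext fun c => by simpa [h] using hDeven c)
  have h0 := (hsimple _ fun _ => map_mem_evenIdeal_of_mem_evenIdeal hI hD1).resolve_left
    heven_ne_bot
  exact .inr (eq_top_of_evenIdeal_eq_top_of_oddIdeal_eq_top hI h0 h1)

/-- If `A` is a commutative associative unital algebra over a field of
characteristic 0 with a nonzero derivation `D` such that `A` has no nonzero proper
`D`-invariant ideals, then `J_1(A,D)` is simple: it has no nonzero proper graded
two-sided ideals. -/
theorem stmt_7 (F : Type*) [Field F] [CharZero F]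
    (A : Type*) [CommRing A] [Algebra F A]
    (D : A →ₗ[F] A) (hD : ∀ a b : A, D (a * b) = a * D b + D a * b)
    (hDne : D ≠ 0)
    (hsimple : ∀ I : Ideal A, (∀ a ∈ I, D a ∈ I) → I = ⊥ ∨ I = ⊤)
    (I : Submodule F (A × A))
    (hgraded : ∀ u ∈ I, (u.1, (0 : A)) ∈ I ∧ ((0 : A), u.2) ∈ I)
    (hideal : ∀ v : A × A, ∀ u ∈ I, jmulOne D v u ∈ I ∧ jmulOne D u v ∈ I) :
    I = ⊥ ∨ I = ⊤ :=
  stmt_7_general F A D hD hDne hsimple I hgraded hideal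
end

section
/- For the vector fields V_{2k} = z(z²-α²)^k d/dz and V_{2k+1} = (z²-α²)^{k+1} d/dz on ℂ \ {±α}, the Lie bracket of vector fields satisfies: [V_n, V_m] = (m-n)V_{n+m} if n,m both odd; [V_n, V_m] = (m-n)V_{n+m} + (m-n-1)α²V_{n+m-2} if n odd, m even; and [V_n, V_m] = (m-n)(V_{n+m} + α²V_{n+m-2}) if n,m both even. -/
/-!
Write `w = z² - α²`, so that `V_{2k-1} = w^k`, `V_{2k} = z w^k`, `dz = 1` and `dw = 2z`.
The Leibniz rule gives `[w^p, w^q] = (q-p) w^(p+q-1) dw`, and similarly for `z w^p` in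
place of `w^p`; the extra `α²`-terms come from substituting `z² = w + α²`.
-/

/-- The coefficient functions of the vector fields `V_n`:
`V_{2k} = z(z²-α²)^k d/dz`, `V_{2k+1} = (z²-α²)^{k+1} d/dz`, for `k ∈ ℤ`,
identified with elements of `ℂ(z)`. -/
noncomputable def Vf (α : ℂ) (n : ℤ) : RatFunc ℂ :=
  if Even n then RatFunc.X * (RatFunc.X ^ 2 - RatFunc.C (α ^ 2)) ^ (n / 2)
  else (RatFunc.X ^ 2 - RatFunc.C (α ^ 2)) ^ ((n + 1) / 2)

namespace Derivation

variable {R F : Type*} [CommRing R] [Field F] [Algebra R F] (d : Derivation R F F)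
  {w : F} (x : F)

theorem map_zpow_eq_mul (p : ℤ) : d (w ^ p) = p * w ^ (p - 1) * d w := by
  rw [leibniz_zpow, zsmul_eq_mul, smul_eq_mul, mul_assoc]

theorem zpow_bracket_zpow (hw : w ≠ 0) (p q : ℤ) :
    w ^ p * d (w ^ q) - d (w ^ p) * w ^ q = (q - p) * w ^ (p + q - 1) * d w := by
  rw [map_zpow_eq_mul d, map_zpow_eq_mul d]
  simp only [zpow_sub_one₀ hw, zpow_add₀ hw]
  ring

theorem zpow_bracket_mul_zpow (hw : w ≠ 0) (p q : ℤ) :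
    w ^ p * d (x * w ^ q) - d (w ^ p) * (x * w ^ q) =
      w ^ (p + q) * d x + (q - p) * x * w ^ (p + q - 1) * d w := by
  rw [leibniz, smul_eq_mul, smul_eq_mul, map_zpow_eq_mul d, map_zpow_eq_mul d]
  simp only [zpow_sub_one₀ hw, zpow_add₀ hw]
  ring

theorem mul_zpow_bracket_mul_zpow (hw : w ≠ 0) (p q : ℤ) :
    x * w ^ p * d (x * w ^ q) - d (x * w ^ p) * (x * w ^ q) =
      (q - p) * x ^ 2 * w ^ (p + q - 1) * d w := by
  rw [leibniz, leibniz, smul_eq_mul, smul_eq_mul, smul_eq_mul, smul_eq_mul,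
    map_zpow_eq_mul d, map_zpow_eq_mul d]
  simp only [zpow_sub_one₀ hw, zpow_add₀ hw]
  ring

end Derivation

namespace RatFunc

theorem X_sq_sub_C_ne_zero {K : Type*} [Field K] (a : K) : (X ^ 2 - C a : RatFunc K) ≠ 0 := by
  simpa [algebraMap_C] using algebraMap_ne_zero (Polynomial.X_pow_sub_C_ne_zero two_pos a)

end RatFunc

namespace Vf

open RatFunc

theorem two_mul (α : ℂ) (k : ℤ) : Vf α (2 * k) = X * (X ^ 2 - C (α ^ 2)) ^ k := by
  rw [Vf, if_pos (even_two_mul k), Int.mul_ediv_cancel_left k two_ne_zero]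

theorem two_mul_sub_one (α : ℂ) (k : ℤ) : Vf α (2 * k - 1) = (X ^ 2 - C (α ^ 2)) ^ k := by
  rw [Vf, if_neg (by simp), sub_add_cancel, Int.mul_ediv_cancel_left k two_ne_zero]

end Vf

theorem Int.exists_eq_two_mul_sub_one {n : ℤ} (h : Odd n) : ∃ k, n = 2 * k - 1 :=
  ⟨(n + 1) / 2, by rcases h with ⟨a, rfl⟩; omega⟩

theorem stmt_9_general (α : ℂ)
    (d : Derivation ℂ (RatFunc ℂ) (RatFunc ℂ)) (hd : d RatFunc.X = 1)
    (n m : ℤ) :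
    (Odd n → Odd m →
      Vf α n * d (Vf α m) - d (Vf α n) * Vf α m = ((m : ℂ) - (n : ℂ)) • Vf α (n + m)) ∧
    (Odd n → Even m →
      Vf α n * d (Vf α m) - d (Vf α n) * Vf α m =
        ((m : ℂ) - (n : ℂ)) • Vf α (n + m)
          + (((m : ℂ) - (n : ℂ) - 1) * α ^ 2) • Vf α (n + m - 2)) ∧
    (Even n → Even m →
      Vf α n * d (Vf α m) - d (Vf α n) * Vf α m =
        ((m : ℂ) - (n : ℂ)) • (Vf α (n + m) + (α ^ 2) • Vf α (n + m - 2))) := by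
  have hw := RatFunc.X_sq_sub_C_ne_zero (α ^ 2)
  have hdw : d (RatFunc.X ^ 2 - RatFunc.C (α ^ 2)) = 2 * RatFunc.X := by
    rw [map_sub, ← RatFunc.algebraMap_eq_C, Derivation.map_algebraMap,
      Derivation.leibniz_pow, hd]
    simp
  refine ⟨fun hn hm => ?_, fun hn hm => ?_, fun hn hm => ?_⟩
  · obtain ⟨p, rfl⟩ := Int.exists_eq_two_mul_sub_one hn
    obtain ⟨q, rfl⟩ := Int.exists_eq_two_mul_sub_one hm
    rw [Vf.two_mul_sub_one, Vf.two_mul_sub_one, d.zpow_bracket_zpow hw, hdw,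
      show 2 * p - 1 + (2 * q - 1) = 2 * (p + q - 1) by ring, Vf.two_mul]
    simp only [RatFunc.smul_eq_C_mul, map_sub, map_intCast]
    push_cast
    ring
  · obtain ⟨p, rfl⟩ := Int.exists_eq_two_mul_sub_one hn
    obtain ⟨q, rfl⟩ := hm.two_dvd
    rw [Vf.two_mul_sub_one, Vf.two_mul, d.zpow_bracket_mul_zpow _ hw, hdw, hd,
      show 2 * p - 1 + 2 * q = 2 * (p + q) - 1 by ring, Vf.two_mul_sub_one,
      show 2 * (p + q) - 1 - 2 = 2 * (p + q - 1) - 1 by ring, Vf.two_mul_sub_one]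
    simp only [RatFunc.smul_eq_C_mul, map_sub, map_mul, map_intCast, map_one, zpow_sub_one₀ hw]
    push_cast
    field_simp
    ring
  · obtain ⟨p, rfl⟩ := hn.two_dvd
    obtain ⟨q, rfl⟩ := hm.two_dvd
    rw [Vf.two_mul, Vf.two_mul, d.mul_zpow_bracket_mul_zpow _ hw, hdw,
      ← mul_add, show 2 * (p + q) - 2 = 2 * (p + q - 1) by ring, Vf.two_mul, Vf.two_mul]
    simp only [RatFunc.smul_eq_C_mul, map_sub, map_intCast, zpow_sub_one₀ hw]
    push_cast
    field_simp
    ring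

/-- the Lie bracket `[f d/dz, g d/dz] = (fg' - f'g) d/dz` of the vector
fields `V_n` satisfies the stated relations.  Here `d` is the derivation of `ℂ(z)`
with `d(z) = 1`, i.e. differentiation of rational functions. -/
theorem stmt_9 (α : ℂ) (hα : α ≠ 0)
    (d : Derivation ℂ (RatFunc ℂ) (RatFunc ℂ)) (hd : d RatFunc.X = 1)
    (n m : ℤ) :
    (Odd n → Odd m →
      Vf α n * d (Vf α m) - d (Vf α n) * Vf α m = ((m : ℂ) - (n : ℂ)) • Vf α (n + m)) ∧
    (Odd n → Even m →
      Vf α n * d (Vf α m) - d (Vf α n) * Vf α m =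
        ((m : ℂ) - (n : ℂ)) • Vf α (n + m)
          + (((m : ℂ) - (n : ℂ) - 1) * α ^ 2) • Vf α (n + m - 2)) ∧
    (Even n → Even m →
      Vf α n * d (Vf α m) - d (Vf α n) * Vf α m =
        ((m : ℂ) - (n : ℂ)) • (Vf α (n + m) + (α ^ 2) • Vf α (n + m - 2))) :=
  stmt_9_general α d hd n m
end

section
/- Let A be a commutative unital ℂ-algebra with derivation D, and let J = J_{1/2}(A,D) with product a∘b = ab, a∘ηb = (1/2)η(ab), ηa∘ηb = aD(b) - D(a)b. In the model A = ℂ[z,z^{-1}], D = d/dz, let Δ be an even derivation of J whose restriction to A equals a ↦ {a,f} := -a'f, i.e. Δ(a) = -D(a)f for all a ∈ A, for some f ∈ A. Then the element δ ∈ A defined by Δ(η1) = ηδ satisfies δ = (1/2)D(f). -/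
/-- key computational lemma.  Take `A = ℂ[z,z⁻¹]`, `D = d/dz`
(the derivation `d` with `d(z) = 1`), and `J = J_{1/2}(A,D)`.  If `Δ` is an even
derivation of `J` whose restriction to the even part `A` is `a ↦ -D(a)f` for a fixed
`f ∈ A`, and `Δ(η1) = ηδ`, then `δ = (1/2)D(f)`. -/
theorem stmt_12
    (d : Derivation ℂ (LaurentPolynomial ℂ) (LaurentPolynomial ℂ))
    (hd : d (LaurentPolynomial.T 1) = 1)
    (Δ : (LaurentPolynomial ℂ × LaurentPolynomial ℂ) →ₗ[ℂ]
         (LaurentPolynomial ℂ × LaurentPolynomial ℂ))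
    (hder : ∀ u v, Δ (jmulHalf d.toLinearMap u v) =
      jmulHalf d.toLinearMap (Δ u) v + jmulHalf d.toLinearMap u (Δ v))
    (hodd : ∀ α : LaurentPolynomial ℂ, (Δ ((0 : LaurentPolynomial ℂ), α)).1 = 0)
    (f : LaurentPolynomial ℂ)
    (hf : ∀ a : LaurentPolynomial ℂ, Δ (a, (0 : LaurentPolynomial ℂ)) = (-(d a * f), 0))
    (δ : LaurentPolynomial ℂ)
    (hδ : Δ ((0 : LaurentPolynomial ℂ), (1 : LaurentPolynomial ℂ)) = (0, δ)) :
    δ = (1/2 : ℂ) • d f := by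
  have hd1 : d (1 : LaurentPolynomial ℂ) = 0 := Derivation.map_one_eq_zero d
  -- Step A
  have hA : ∀ a : LaurentPolynomial ℂ,
      Δ (0, a) = (0, a * δ - d a * f) := by
    intro a
    have h := hder (a, 0) (0, 1)
    have e1 : jmulHalf d.toLinearMap (a, 0) (0, 1) = (1/2 : ℂ) • ((0 : LaurentPolynomial ℂ), a) := by
      simp [jmulHalf, hd1, Prod.smul_def]
    rw [e1, map_smul, hf, hδ] at h
    have hs : (1/2:ℂ) • (Δ (0, a)).2 = -((1/2:ℂ) • (d a * f)) + (1/2:ℂ) • (a * δ) := by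
      have := congrArg Prod.snd h
      simpa [jmulHalf, hd1, smul_smul] using this
    have h2 : (Δ (0, a)).2 = a * δ - d a * f := by
      linear_combination (norm := module) (2:ℂ) • hs
    have h1 : (Δ (0, a)).1 = 0 := hodd a
    have hsplit : Δ (0, a) = ((Δ (0,a)).1, (Δ (0,a)).2) := rfl
    rw [hsplit, h1, h2]
  -- Step B
  have h := hder (0, 1) (0, LaurentPolynomial.T 1)
  have e1 : jmulHalf d.toLinearMap ((0 : LaurentPolynomial ℂ), 1) (0, LaurentPolynomial.T 1)
      = ((1 : LaurentPolynomial ℂ), 0) := by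
    simp [jmulHalf, hd1, hd]
  rw [e1, hf, hδ, hA] at h
  have hs := congrArg Prod.fst h
  simp only [jmulHalf, Derivation.coeFn_coe, hd1, hd, map_sub, Derivation.leibniz,
    smul_eq_mul, mul_zero, zero_mul, mul_one, one_mul, map_zero, zero_add, add_zero,
    sub_zero, zero_sub, neg_zero, Prod.fst_add] at hs
  -- hs : 0 = (δ * 1 - d δ * T 1) + (T 1 * d δ + δ * 1 - d f)
  have key : δ + δ = d f := by linear_combination -hs
  linear_combination (norm := module) (1/2 : ℂ) • key
end

section
/- The multiplication on A_{0,3} given on basis elements G_n, n ∈ ℤ, by G_nG_m = G_{n+m} + α²G_{n+m-2} if n,m are both odd and G_nG_m = G_{n+m} otherwise, is commutative and associative, and G_0 is a unit. -/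
/-- The multiplication of `A_{0,3}`, the free ℂ-module on basis `{G_n : n ∈ ℤ}`
(with `G_n` modeled by `Finsupp.single n 1`), determined on basis elements by
`G_n G_m = G_{n+m} + α²G_{n+m-2}` if `n, m` are both odd, and `G_n G_m = G_{n+m}`
otherwise. -/
noncomputable def gmul (α : ℂ) (u v : ℤ →₀ ℂ) : ℤ →₀ ℂ :=
  u.sum fun n c => v.sum fun m d =>
    if Odd n ∧ Odd m then
      Finsupp.single (n + m) (c * d) + Finsupp.single (n + m - 2) (α ^ 2 * (c * d))
    else Finsupp.single (n + m) (c * d)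

/-! The product is biadditive, so all three identities reduce to basis elements. There
commutativity is the symmetry of the rule in `n, m`, and associativity holds because both
bracketings of `G_n G_m G_k` equal `G_{n+m+k} + α² G_{n+m+k-2}` when at least two of
`n, m, k` are odd and `G_{n+m+k}` otherwise. -/

section

variable (α : ℂ)

theorem gmul_zero_left (v : ℤ →₀ ℂ) : gmul α 0 v = 0 := Finsupp.sum_zero_index

theorem gmul_zero_right (u : ℤ →₀ ℂ) : gmul α u 0 = 0 := by simp [gmul]

theorem gmul_add_left (u u' v : ℤ →₀ ℂ) : gmul α (u + u') v = gmul α u v + gmul α u' v := by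
  refine Finsupp.sum_add_index' (by simp) fun n c c' => ?_
  rw [← Finsupp.sum_add]
  refine Finsupp.sum_congr fun m _ => ?_
  split_ifs <;> simp only [add_mul, mul_add, Finsupp.single_add, add_add_add_comm]

theorem gmul_add_right (u v v' : ℤ →₀ ℂ) : gmul α u (v + v') = gmul α u v + gmul α u v' := by
  rw [gmul, gmul, gmul, ← Finsupp.sum_add]
  refine Finsupp.sum_congr fun n _ => Finsupp.sum_add_index' (by simp) fun m d d' => ?_
  split_ifs <;> simp only [mul_add, Finsupp.single_add, add_add_add_comm]

theorem gmul_single_single (n m : ℤ) (c d : ℂ) :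
    gmul α (Finsupp.single n c) (Finsupp.single m d) =
      if Odd n ∧ Odd m then
        Finsupp.single (n + m) (c * d) + Finsupp.single (n + m - 2) (α ^ 2 * (c * d))
      else Finsupp.single (n + m) (c * d) := by
  rw [gmul, Finsupp.sum_single_index, Finsupp.sum_single_index] <;> simp

theorem gmul_single_single_comm (n m : ℤ) (c d : ℂ) :
    gmul α (Finsupp.single n c) (Finsupp.single m d) =
      gmul α (Finsupp.single m d) (Finsupp.single n c) := by
  simp only [gmul_single_single, and_comm, add_comm n, mul_comm c]

theorem gmul_single_single_assoc (n m k : ℤ) (c d e : ℂ) :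
    gmul α (gmul α (Finsupp.single n c) (Finsupp.single m d)) (Finsupp.single k e) =
      gmul α (Finsupp.single n c) (gmul α (Finsupp.single m d) (Finsupp.single k e)) := by
  by_cases hn : Odd n <;> by_cases hm : Odd m <;> by_cases hk : Odd k <;>
    simp only [gmul_single_single, gmul_add_left, gmul_add_right, Int.odd_add, odd_sub_two,
      ← Int.not_odd_iff_even, hn, hm, hk, and_self, and_true, and_false, iff_true, iff_false,
      not_true_eq_false, not_false_eq_true, ↓reduceIte] <;> ring_nf

theorem gmul_comm (u v : ℤ →₀ ℂ) : gmul α u v = gmul α v u := by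
  induction u using Finsupp.induction_linear with
  | zero => rw [gmul_zero_left, gmul_zero_right]
  | add u u' hu hu' => rw [gmul_add_left, gmul_add_right, hu, hu']
  | single n c =>
    induction v using Finsupp.induction_linear with
    | zero => rw [gmul_zero_left, gmul_zero_right]
    | add v v' hv hv' => rw [gmul_add_left, gmul_add_right, hv, hv']
    | single m d => exact gmul_single_single_comm α n m c d

theorem gmul_assoc (u v w : ℤ →₀ ℂ) : gmul α (gmul α u v) w = gmul α u (gmul α v w) := by
  induction u using Finsupp.induction_linear with
  | zero => simp only [gmul_zero_left]
  | add u u' hu hu' => simp only [gmul_add_left, hu, hu']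
  | single n c =>
    induction v using Finsupp.induction_linear with
    | zero => simp only [gmul_zero_left, gmul_zero_right]
    | add v v' hv hv' => simp only [gmul_add_left, gmul_add_right, hv, hv']
    | single m d =>
      induction w using Finsupp.induction_linear with
      | zero => simp only [gmul_zero_right]
      | add w w' hw hw' => simp only [gmul_add_right, hw, hw']
      | single k e => exact gmul_single_single_assoc α n m k c d e

theorem gmul_single_zero_one_left (u : ℤ →₀ ℂ) : gmul α (Finsupp.single 0 1) u = u := by
  induction u using Finsupp.induction_linear with
  | zero => exact gmul_zero_right α _
  | add u u' hu hu' => rw [gmul_add_right, hu, hu']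
  | single m d => simp [gmul_single_single]

end

/-- the multiplication of `A_{0,3}` is commutative and associative,
and `G_0` is a unit. -/
theorem stmt_18 (α : ℂ) :
    (∀ u v : ℤ →₀ ℂ, gmul α u v = gmul α v u) ∧
    (∀ u v w : ℤ →₀ ℂ, gmul α (gmul α u v) w = gmul α u (gmul α v w)) ∧
    (∀ u : ℤ →₀ ℂ, gmul α (Finsupp.single 0 1) u = u ∧ gmul α u (Finsupp.single 0 1) = u) := by
  refine ⟨gmul_comm α, gmul_assoc α, fun u => ⟨gmul_single_zero_one_left α u, ?_⟩⟩
  rw [gmul_comm, gmul_single_zero_one_left]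
end

section
/- For a Lie antialgebra A, the bracket on ovs(A) is well-defined and super-skewsymmetric on odd elements: for a, b, c ∈ A_1 and x ∈ A_0, the expression [a⊙b, c] := a(bc) + b(ac) is balanced, i.e. (ax)⊙b and a⊙(bx) give the same value: (ax)·(bc) + b·((ax)c) = a·((bx)c) + (bx)·(ac). Prove this identity from the Lie antialgebra axioms (LA1), (LA2), (LA3) and supercommutativity. -/
/-!
Even elements act on odd ones through (LA1) by operators that commute with each other, so by
supercommutativity and (LA2) every term of the identity becomes either `x` acting on a triple
product of `a, b, c` or a triple product of `a, b, cx`. The two sides then differ by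
`x(c(ab)) - (cx)(ab)`, which is `0`: the two terms come from the odd Jacobi identity (LA3), applied
once to `a, b, c` and once to `a, b, cx`.
-/

section LieAntialgebra

variable {K V : Type*} [Field K] [AddCommGroup V] [Module K V]
  (m : V →ₗ[K] V →ₗ[K] V) (A0 A1 : Submodule K V)

theorem mul_mul_odd_comm
    (hc00 : ∀ x y, x ∈ A0 → y ∈ A0 → m x y = m y x)
    (hLA1 : ∀ x1 x2 y, x1 ∈ A0 → x2 ∈ A0 → y ∈ A1 →
      m x1 (m x2 y) = (1/2 : K) • m (m x1 x2) y)
    {x1 x2 y : V} (hx1 : x1 ∈ A0) (hx2 : x2 ∈ A0) (hy : y ∈ A1) :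
    m x1 (m x2 y) = m x2 (m x1 y) := by
  rw [hLA1 x1 x2 y hx1 hx2 hy, hLA1 x2 x1 y hx2 hx1 hy, hc00 x1 x2 hx1 hx2]

theorem odd_mul_mul_even [NeZero (2 : K)]
    (h00 : ∀ x y, x ∈ A0 → y ∈ A0 → m x y ∈ A0)
    (hc01 : ∀ x y, x ∈ A0 → y ∈ A1 → m x y = m y x)
    (hLA1 : ∀ x1 x2 y, x1 ∈ A0 → x2 ∈ A0 → y ∈ A1 →
      m x1 (m x2 y) = (1/2 : K) • m (m x1 x2) y)
    {x u y : V} (hx : x ∈ A0) (hu : u ∈ A0) (hy : y ∈ A1) :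
    m y (m x u) = (2 : K) • m x (m y u) := by
  rw [← hc01 _ y (h00 x u hx hu) hy, ← hc01 u y hu hy, hLA1 x u y hx hu hy, smul_smul,
    mul_one_div_cancel (NeZero.ne 2), one_smul]

theorem mul_odd_even_mul
    (h10 : ∀ x y, x ∈ A1 → y ∈ A0 → m x y ∈ A1)
    (hc00 : ∀ x y, x ∈ A0 → y ∈ A0 → m x y = m y x)
    (hc01 : ∀ x y, x ∈ A0 → y ∈ A1 → m x y = m y x)
    (hLA1 : ∀ x1 x2 y, x1 ∈ A0 → x2 ∈ A0 → y ∈ A1 →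
      m x1 (m x2 y) = (1/2 : K) • m (m x1 x2) y)
    {y x u : V} (hy : y ∈ A1) (hx : x ∈ A0) (hu : u ∈ A0) :
    m (m y x) u = m x (m y u) := by
  rw [← hc01 u _ hu (h10 y x hy hx), ← hc01 x y hx hy,
    mul_mul_odd_comm m A0 A1 hc00 hLA1 hu hx hy, hc01 u y hu hy]

theorem mul_odd_even_odd
    (hc01 : ∀ x y, x ∈ A0 → y ∈ A1 → m x y = m y x)
    (hLA2 : ∀ x y1 y2, x ∈ A0 → y1 ∈ A1 → y2 ∈ A1 →
      m x (m y1 y2) = m (m x y1) y2 + m y1 (m x y2))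
    {y x z : V} (hy : y ∈ A1) (hx : x ∈ A0) (hz : z ∈ A1) :
    m (m y x) z = m x (m y z) - m y (m z x) := by
  rw [hLA2 x y z hx hy hz, hc01 x y hx hy, hc01 x z hx hz, add_sub_cancel_right]

theorem odd_jacobi
    (hc11 : ∀ y z, y ∈ A1 → z ∈ A1 → m y z = - m z y)
    (hLA3 : ∀ y1 y2 y3, y1 ∈ A1 → y2 ∈ A1 → y3 ∈ A1 →
      m y1 (m y2 y3) + m y2 (m y3 y1) + m y3 (m y1 y2) = 0)
    {a b c : V} (ha : a ∈ A1) (hb : b ∈ A1) (hc : c ∈ A1) :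
    m b (m a c) - m a (m b c) = m c (m a b) := by
  have h := hLA3 a b c ha hb hc
  rw [hc11 c a hc ha, map_neg] at h
  linear_combination (norm := module) -h

end LieAntialgebra

theorem stmt_19_general (V : Type*) [AddCommGroup V] [Module ℂ V]
    (m : V →ₗ[ℂ] V →ₗ[ℂ] V) (A0 A1 : Submodule ℂ V)
    (h00 : ∀ x y, x ∈ A0 → y ∈ A0 → m x y ∈ A0)
    (h10 : ∀ x y, x ∈ A1 → y ∈ A0 → m x y ∈ A1)
    (h11 : ∀ x y, x ∈ A1 → y ∈ A1 → m x y ∈ A0)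
    (hc00 : ∀ x y, x ∈ A0 → y ∈ A0 → m x y = m y x)
    (hc01 : ∀ x y, x ∈ A0 → y ∈ A1 → m x y = m y x)
    (hc11 : ∀ y z, y ∈ A1 → z ∈ A1 → m y z = - m z y)
    (hLA1 : ∀ x1 x2 y, x1 ∈ A0 → x2 ∈ A0 → y ∈ A1 →
      m x1 (m x2 y) = (1/2 : ℂ) • m (m x1 x2) y)
    (hLA2 : ∀ x y1 y2, x ∈ A0 → y1 ∈ A1 → y2 ∈ A1 →
      m x (m y1 y2) = m (m x y1) y2 + m y1 (m x y2))
    (hLA3 : ∀ y1 y2 y3, y1 ∈ A1 → y2 ∈ A1 → y3 ∈ A1 →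
      m y1 (m y2 y3) + m y2 (m y3 y1) + m y3 (m y1 y2) = 0)
    (a b c x : V) (ha : a ∈ A1) (hb : b ∈ A1) (hc : c ∈ A1) (hx : x ∈ A0) :
    m (m a x) (m b c) + m b (m (m a x) c) =
      m a (m (m b x) c) + m (m b x) (m a c) := by
  have hcx : m c x ∈ A1 := h10 c x hc hx
  have jacobi_abc : m x (m b (m a c)) - m x (m a (m b c)) = m x (m c (m a b)) := by
    rw [← map_sub, odd_jacobi m A1 hc11 hLA3 ha hb hc]
  have jacobi_abcx : m b (m a (m c x)) - m a (m b (m c x)) = m x (m c (m a b)) := by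
    rw [odd_jacobi m A1 hc11 hLA3 ha hb hcx, mul_odd_even_mul m A0 A1 h10 hc00 hc01 hLA1 hc hx
      (h11 a b ha hb)]
  rw [mul_odd_even_mul m A0 A1 h10 hc00 hc01 hLA1 ha hx (h11 b c hb hc),
    mul_odd_even_mul m A0 A1 h10 hc00 hc01 hLA1 hb hx (h11 a c ha hc),
    mul_odd_even_odd m A0 A1 hc01 hLA2 ha hx hc, mul_odd_even_odd m A0 A1 hc01 hLA2 hb hx hc,
    map_sub, map_sub, odd_mul_mul_even m A0 A1 h00 hc01 hLA1 hx (h11 a c ha hc) hb,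
    odd_mul_mul_even m A0 A1 h00 hc01 hLA1 hx (h11 b c hb hc) ha]
  linear_combination (norm := module) jacobi_abc - jacobi_abcx

/-- in a Lie antialgebra `A = A₀ ⊕ A₁`, for `a, b, c ∈ A₁` and
`x ∈ A₀`, the balancing identity `(ax)(bc) + b((ax)c) = a((bx)c) + (bx)(ac)` holds;
this is what makes the bracket `[a⊙b, c] = a(bc) + b(ac)` of `ovs(A)` well defined. -/
theorem stmt_19 (V : Type*) [AddCommGroup V] [Module ℂ V]
    (m : V →ₗ[ℂ] V →ₗ[ℂ] V) (A0 A1 : Submodule ℂ V)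
    (h00 : ∀ x y, x ∈ A0 → y ∈ A0 → m x y ∈ A0)
    (h01 : ∀ x y, x ∈ A0 → y ∈ A1 → m x y ∈ A1)
    (h10 : ∀ x y, x ∈ A1 → y ∈ A0 → m x y ∈ A1)
    (h11 : ∀ x y, x ∈ A1 → y ∈ A1 → m x y ∈ A0)
    (hc00 : ∀ x y, x ∈ A0 → y ∈ A0 → m x y = m y x)
    (hc01 : ∀ x y, x ∈ A0 → y ∈ A1 → m x y = m y x)
    (hc11 : ∀ y z, y ∈ A1 → z ∈ A1 → m y z = - m z y)
    (hLA0 : ∀ x1 x2 x3, x1 ∈ A0 → x2 ∈ A0 → x3 ∈ A0 →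
      m x1 (m x2 x3) = m (m x1 x2) x3)
    (hLA1 : ∀ x1 x2 y, x1 ∈ A0 → x2 ∈ A0 → y ∈ A1 →
      m x1 (m x2 y) = (1/2 : ℂ) • m (m x1 x2) y)
    (hLA2 : ∀ x y1 y2, x ∈ A0 → y1 ∈ A1 → y2 ∈ A1 →
      m x (m y1 y2) = m (m x y1) y2 + m y1 (m x y2))
    (hLA3 : ∀ y1 y2 y3, y1 ∈ A1 → y2 ∈ A1 → y3 ∈ A1 →
      m y1 (m y2 y3) + m y2 (m y3 y1) + m y3 (m y1 y2) = 0)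
    (a b c x : V) (ha : a ∈ A1) (hb : b ∈ A1) (hc : c ∈ A1) (hx : x ∈ A0) :
    m (m a x) (m b c) + m b (m (m a x) c) =
      m a (m (m b x) c) + m (m b x) (m a c) :=
  stmt_19_general V m A0 A1 h00 h10 h11 hc00 hc01 hc11 hLA1 hLA2 hLA3 a b c x ha hb hc hx
end
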